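/- Let p be prime, 0 < a_1 ≤ ... ≤ a_n integers, t > 1 with t ≤ n/2, T ∈ H_t, and suppose Σ_{i∈T} a_i < p. Then for any residue k' the family V = {F ⊆ [2t-1] : Σ_{i∈F} a_i ≡ k' (mod p)} does not shatter T. -/

import Mathlib

/-!
Put `C = [2t-1] \ T`; the `H_t` condition gives `T ⊆ [2t-1]`, `2t-1 ∈ T` and `|C| = t-1`. It also
says that `T` has at most `x/2` elements in `[1, x]` for `x < 2t-1`, so `C` has at least as many
elements as `T \ {2t-1}` below every threshold: the `i`-th element of `C` is at most the `i`-th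
element of `T \ {2t-1}`, and monotonicity of `a` gives `Σ_C a + a_{2t-1} ≤ Σ_T a < p`.

A set `F ⊆ [2t-1]` with `F ∩ T = Y` has `Σ_Y a ≤ Σ_F a ≤ Σ_Y a + Σ_C a`. If `V` shattered `T`, take
witnesses `F` for `Y ∪ {x}` and `F'` for `Y`: then `Σ_F a < Σ_{F'} a + a_x + Σ_C a ≤ Σ_{F'} a + p`,
and `Σ_F a ≡ Σ_{F'} a (mod p)` forces `Σ_F a ≤ Σ_{F'} a`. Going up from `Y = ∅` to `Y = T`, the
witness for `T` has sum at most `Σ_C a < Σ_T a`, which is absurd.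
-/

def Ht (n t : ℕ) (T : Finset ℕ) : Prop :=
  T ⊆ Finset.Icc 1 n ∧ T.card = t ∧
  (∀ s ∈ T, (T.filter (· ≤ s)).card < t → 2 * (T.filter (· ≤ s)).card ≤ s) ∧
  (∀ s ∈ T, (T.filter (· ≤ s)).card = t → s < 2 * t)

open Finset

section Majorization

variable {α : Type*} [LinearOrder α]

theorem Finset.card_filter_le_erase_max {s : Finset α} {m : α} (hm : m ∈ s)
    (hmax : ∀ y ∈ s, y ≤ m) (x : α) :
    #((s.erase m).filter (· ≤ x)) = min #(s.filter (· ≤ x)) (#s - 1) := by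
  rw [filter_erase]
  by_cases hmx : m ≤ x
  · rw [filter_true_of_mem fun y hy => (hmax y hy).trans hmx, card_erase_of_mem hm]
    omega
  · have hm' : m ∉ s.filter (· ≤ x) := by simp [hmx]
    have hsub : s.filter (· ≤ x) ⊆ s.erase m := fun y hy =>
      mem_erase.2 ⟨ne_of_mem_of_not_mem hy hm', (mem_filter.1 hy).1⟩
    have hcard := card_le_card hsub
    rw [card_erase_of_mem hm] at hcard
    rw [erase_eq_of_notMem hm']
    omega

theorem Finset.sum_le_sum_of_card_filter_le {β : Type*} [AddCommMonoid β] [PartialOrder β]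
    [IsOrderedAddMonoid β] {s : Set α} {f : α → β} (hf : MonotoneOn f s) {A B : Finset α}
    (hA : ↑A ⊆ s) (hB : ↑B ⊆ s) (hcard : #A = #B)
    (hle : ∀ x, #(A.filter (· ≤ x)) ≤ #(B.filter (· ≤ x))) :
    ∑ i ∈ B, f i ≤ ∑ i ∈ A, f i := by
  induction A using Finset.strongInduction generalizing B with
  | H A ih =>
  rcases A.eq_empty_or_nonempty with rfl | hAne
  · rw [card_eq_zero.1 (hcard.symm.trans card_empty)]
  have hBne : B.Nonempty := card_pos.1 (hcard ▸ card_pos.2 hAne)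
  set mA := A.max' hAne
  set mB := B.max' hBne
  have hmA : mA ∈ A := max'_mem A hAne
  have hmB : mB ∈ B := max'_mem B hBne
  have hBA : mB ≤ mA := by
    have hAall : A.filter (· ≤ mA) = A := filter_true_of_mem fun y hy => le_max' A y hy
    have hall : #(B.filter (· ≤ mA)) = #B :=
      le_antisymm (card_filter_le _ _) (hcard ▸ hAall ▸ hle mA)
    exact card_filter_eq_iff.1 hall mB hmB
  have herase : ∑ i ∈ B.erase mB, f i ≤ ∑ i ∈ A.erase mA, f i := by
    refine ih _ (erase_ssubset hmA) ((coe_subset.2 (erase_subset _ _)).trans hA)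
      ((coe_subset.2 (erase_subset _ _)).trans hB)
      (by rw [card_erase_of_mem hmA, card_erase_of_mem hmB, hcard]) fun x => ?_
    rw [card_filter_le_erase_max hmA (fun y hy => le_max' A y hy),
      card_filter_le_erase_max hmB (fun y hy => le_max' B y hy), hcard]
    exact min_le_min_right _ (hle x)
  rw [← sum_erase_add _ _ hmA, ← sum_erase_add _ _ hmB]
  exact add_le_add herase (hf (hB hmB) (hA hmA) hBA)

end Majorization

namespace Ht

variable {n t : ℕ} {T : Finset ℕ}

theorem two_mul_card_filter_le (hT : Ht n t T) {x : ℕ} (hx : #(T.filter (· ≤ x)) < t) :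
    2 * #(T.filter (· ≤ x)) ≤ x := by
  rcases (T.filter (· ≤ x)).eq_empty_or_nonempty with h | h
  · simp [h]
  set s := (T.filter (· ≤ x)).max' h
  obtain ⟨hsT, hsx⟩ := mem_filter.1 (max'_mem _ h)
  have hfilter : T.filter (· ≤ s) = T.filter (· ≤ x) := by
    ext y
    simp only [mem_filter, and_congr_right_iff]
    exact fun hy => ⟨fun hys => hys.trans hsx, fun hyx => le_max' _ y (mem_filter.2 ⟨hy, hyx⟩)⟩
  have hs := hT.2.2.1 s hsT (hfilter ▸ hx)
  rw [hfilter] at hs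
  omega

theorem le_two_mul_sub_one (hT : Ht n t T) {s : ℕ} (hs : s ∈ T) : s ≤ 2 * t - 1 := by
  have hne : T.Nonempty := ⟨s, hs⟩
  have hall : T.filter (· ≤ T.max' hne) = T := filter_true_of_mem fun y hy => le_max' T y hy
  have hmax := hT.2.2.2 _ (max'_mem T hne) (by rw [hall, hT.2.1])
  have hsmax := le_max' T s hs
  omega

theorem two_mul_sub_one_mem (hT : Ht n t T) (ht : 0 < t) : 2 * t - 1 ∈ T := by
  have hne : T.Nonempty := card_pos.1 (hT.2.1 ▸ ht)
  set M := T.max' hne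
  have hM : M ∈ T := max'_mem T hne
  have hM1 : 1 ≤ M := (mem_Icc.1 (hT.1 hM)).1
  have hbelow : T.filter (· ≤ M - 1) = T.erase M := by
    ext y
    by_cases hy : y ∈ T
    · have := le_max' T y hy
      simp only [mem_filter, mem_erase, hy, and_true, true_and]
      omega
    · simp [hy]
  have hcard : #(T.filter (· ≤ M - 1)) = t - 1 := by
    rw [hbelow, card_erase_of_mem hM, hT.2.1]
  have hlower := hT.two_mul_card_filter_le (x := M - 1) (by omega)
  have hupper := hT.le_two_mul_sub_one hM
  convert hM using 1
  omega

theorem subset_Icc (hT : Ht n t T) : T ⊆ Icc 1 (2 * t - 1) := fun _ hs =>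
  mem_Icc.2 ⟨(mem_Icc.1 (hT.1 hs)).1, hT.le_two_mul_sub_one hs⟩

theorem card_Icc_sdiff (hT : Ht n t T) : #(Icc 1 (2 * t - 1) \ T) = t - 1 := by
  rw [card_sdiff_of_subset hT.subset_Icc, Nat.card_Icc, hT.2.1]
  omega

theorem card_filter_erase_le_card_filter_sdiff (hT : Ht n t T) (ht : 0 < t) (x : ℕ) :
    #((T.erase (2 * t - 1)).filter (· ≤ x)) ≤ #((Icc 1 (2 * t - 1) \ T).filter (· ≤ x)) := by
  have hM := hT.two_mul_sub_one_mem ht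
  rw [card_filter_le_erase_max hM fun y => hT.le_two_mul_sub_one, hT.2.1]
  by_cases hx : 2 * t - 1 ≤ x
  · rw [filter_true_of_mem fun y hy => (mem_Icc.1 (mem_sdiff.1 hy).1).2.trans hx,
      hT.card_Icc_sdiff]
    exact min_le_right _ _
  have hlt : #(T.filter (· ≤ x)) < t :=
    hT.2.1 ▸ card_lt_card (filter_ssubset.2 ⟨_, hM, hx⟩)
  have h2k := hT.two_mul_card_filter_le hlt
  have hbelow : (Icc 1 (2 * t - 1) \ T).filter (· ≤ x) = Icc 1 x \ T.filter (· ≤ x) := by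
    ext y
    by_cases hy : y ∈ T
    · simp [hy]
    · simp only [mem_filter, mem_sdiff, mem_Icc, hy, not_false_eq_true, and_true, false_and]
      omega
  have hsub : T.filter (· ≤ x) ⊆ Icc 1 x := fun y hy =>
    mem_Icc.2 ⟨(mem_Icc.1 (hT.1 (mem_filter.1 hy).1)).1, (mem_filter.1 hy).2⟩
  rw [hbelow, card_sdiff_of_subset hsub, Nat.card_Icc]
  omega

theorem sum_sdiff_add_le_sum {a : ℕ → ℕ} (hT : Ht n t T) (ht : 0 < t)
    (ha : MonotoneOn a (Icc 1 n)) :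
    ∑ i ∈ Icc 1 (2 * t - 1) \ T, a i + a (2 * t - 1) ≤ ∑ i ∈ T, a i := by
  have hM := hT.two_mul_sub_one_mem ht
  have hMn := (mem_Icc.1 (hT.1 hM)).2
  rw [← sum_erase_add _ _ hM]
  refine add_le_add_left (sum_le_sum_of_card_filter_le ha ?_ ?_ ?_
    (hT.card_filter_erase_le_card_filter_sdiff ht)) _
  · exact coe_subset.2 ((erase_subset _ _).trans hT.1)
  · exact coe_subset.2 fun y hy => Icc_subset_Icc_right hMn (mem_sdiff.1 hy).1
  · rw [card_erase_of_mem hM, hT.2.1, hT.card_Icc_sdiff]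

end Ht

theorem not_shatters_sum_modEq_of_sum_sdiff_lt {ι : Type*} [DecidableEq ι] {f : ι → ℕ}
    {U T : Finset ι} {p k : ℕ} (hlt : ∑ i ∈ U \ T, f i < ∑ i ∈ T, f i)
    (hstep : ∀ x ∈ T, f x + ∑ i ∈ U \ T, f i < p) :
    ¬ ∀ Y ⊆ T, ∃ F ⊆ U, ∑ i ∈ F, f i ≡ k [MOD p] ∧ F ∩ T = Y := by
  intro h
  set c := ∑ i ∈ U \ T, f i
  have hbounds : ∀ F ⊆ U,
      ∑ i ∈ F ∩ T, f i ≤ ∑ i ∈ F, f i ∧ ∑ i ∈ F, f i ≤ ∑ i ∈ F ∩ T, f i + c := by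
    intro F hF
    rw [← sum_inter_add_sum_sdiff F T f]
    exact ⟨Nat.le_add_right _ _,
      Nat.add_le_add_left (sum_le_sum_of_subset (sdiff_subset_sdiff hF subset_rfl)) _⟩
  have hsmall : ∀ Y ⊆ T, ∀ F ⊆ U, ∑ i ∈ F, f i ≡ k [MOD p] → F ∩ T = Y →
      ∑ i ∈ F, f i ≤ c := by
    intro Y hY
    induction Y using Finset.induction_on with
    | empty =>
      intro F hF _ hFT
      simpa [hFT] using (hbounds F hF).2
    | insert x Y hxY ih =>
      obtain ⟨hx, hY⟩ := insert_subset_iff.1 hY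
      intro F hF hFk hFT
      obtain ⟨F', hF', hF'k, hF'T⟩ := h Y hY
      have hF'c := ih hY F' hF' hF'k hF'T
      have hF'Y := (hbounds F' hF').1
      have hFY := (hbounds F hF).2
      rw [hF'T] at hF'Y
      rw [hFT, sum_insert hxY] at hFY
      have hgap := hstep x hx
      by_contra hFc
      have hjump := (hF'k.trans hFk.symm).add_le_of_lt (by omega)
      omega
  obtain ⟨F, hF, hFk, hFT⟩ := h T subset_rfl
  have hFlower := (hbounds F hF).1
  rw [hFT] at hFlower
  have hFupper := hsmall T subset_rfl F hF hFk hFT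
  omega

theorem stmt11_general (n t p : ℕ) (a : ℕ → ℕ)
    (hpos : ∀ i ∈ Finset.Icc 1 n, 0 < a i)
    (hmono : ∀ i j, 1 ≤ i → i ≤ j → j ≤ n → a i ≤ a j)
    (ht : 1 < t) (T : Finset ℕ) (hT : Ht n t T)
    (hsum : (∑ i ∈ T, a i) < p) (k' : ℕ) :
    ¬ (∀ Y ⊆ T, ∃ F, F ⊆ Finset.Icc 1 (2 * t - 1) ∧
        (∑ i ∈ F, a i) ≡ k' [MOD p] ∧ F ∩ T = Y) := by
  have ha : MonotoneOn a (Icc 1 n) := fun i hi j hj hij =>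
    hmono i j (mem_Icc.1 hi).1 hij (mem_Icc.1 hj).2
  have hweight := hT.sum_sdiff_add_le_sum (by omega) ha
  have hM := hT.two_mul_sub_one_mem (by omega)
  have hposM := hpos _ (hT.1 hM)
  refine not_shatters_sum_modEq_of_sum_sdiff_lt (by omega) fun x hx => ?_
  have hxM := ha (hT.1 hx) (hT.1 hM) (hT.le_two_mul_sub_one hx)
  omega

/-- let `p` be prime, `0 < a₁ ≤ … ≤ a_n`, `1 < t ≤ n/2`,
`T ∈ H_t` with `Σ_{i∈T} aᵢ < p`.  Then for any residue `k'`, the family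
`{F ⊆ [2t-1] : Σ_{i∈F} aᵢ ≡ k' (mod p)}` does not shatter `T`. -/
theorem stmt11 (n t p : ℕ) (hp : p.Prime) (a : ℕ → ℕ)
    (hpos : ∀ i ∈ Finset.Icc 1 n, 0 < a i)
    (hmono : ∀ i j, 1 ≤ i → i ≤ j → j ≤ n → a i ≤ a j)
    (ht : 1 < t) (htn : 2 * t ≤ n) (T : Finset ℕ) (hT : Ht n t T)
    (hsum : (∑ i ∈ T, a i) < p) (k' : ℕ) :
    ¬ (∀ Y ⊆ T, ∃ F, F ⊆ Finset.Icc 1 (2 * t - 1) ∧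
        (∑ i ∈ F, a i) ≡ k' [MOD p] ∧ F ∩ T = Y) :=
  stmt11_general n t p a hpos hmono ht T hT hsum k'
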